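/- Suppose there exist simple 5-(18,7,66), 5-(18,8,112), 5-(18,9,100) and 5-(18,10,792) designs. Then there exists a simple 5-(36, 10, 82152) design (note 82152 = 1304 × 63). -/

import Mathlib

/-!
Split the 36 points into two halves `A`, `A'` of 18. On each half, let layer `j` (`j ≤ 10`) be all
`j`-subsets if `j ≤ 5`, nothing if `j = 6`, and a copy of the given `5-(18, j, λ_j)` design if
`7 ≤ j ≤ 10`. The blocks are the unions `c ∪ d` with `c` in layer `i` on `A` and `d` in layer
`10 - i` on `A'`. A 5-set meeting `A` in `s` points lies in `∑ᵢ λ_s(i) λ_{5-s}(10 - i)` blocks,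
where `λ_s(j)` counts the blocks of layer `j` through an `s`-set (for a 5-design it is
determined by double counting), and this sum is 82152 for every `s ≤ 5`.
-/

/-- `SimpleDesignExists t v k lam` asserts the existence of a simple
`t-(v, k, lam)` design: a `v`-set `X` together with a set `B` of distinct
`k`-element subsets of `X` (blocks) such that every `t`-element subset of `X`
is contained in exactly `lam` blocks. -/
def SimpleDesignExists (t v k lam : ℕ) : Prop :=
  ∃ (X : Finset ℕ) (B : Finset (Finset ℕ)),
    X.card = v ∧
    (∀ b ∈ B, b ⊆ X ∧ b.card = k) ∧
    (∀ T ⊆ X, T.card = t → (B.filter (fun b => T ⊆ b)).card = lam)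

open Finset
open scoped FinsetFamily

namespace Finset

variable {α : Type*} [DecidableEq α]

lemma card_filter_powersetCard_superset {X S : Finset α} {n : ℕ} (hS : S ⊆ X) (hSn : #S ≤ n) :
    #{T ∈ X.powersetCard n | S ⊆ T} = (#X - #S).choose (n - #S) := by
  rw [← card_sdiff_of_subset hS, ← card_powersetCard]
  refine card_nbij' (· \ S) (· ∪ S) ?_ ?_ ?_ ?_
  · intro T hT
    simp only [mem_coe, mem_filter, mem_powersetCard] at hT ⊢
    exact ⟨sdiff_subset_sdiff hT.1.1 le_rfl, by rw [card_sdiff_of_subset hT.2, hT.1.2]⟩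
  · intro U hU
    simp only [mem_coe, mem_filter, mem_powersetCard, subset_sdiff] at hU ⊢
    refine ⟨⟨union_subset hU.1.1 hS, ?_⟩, subset_union_right⟩
    rw [card_union_of_disjoint hU.1.2, hU.2]
    omega
  · intro T hT
    exact sdiff_union_of_subset (mem_filter.1 hT).2
  · intro U hU
    exact union_sdiff_cancel_right (subset_sdiff.1 (mem_powersetCard.1 hU).1).2

lemma exists_perm_map_eq {X Y : Finset α} (h : #X = #Y) :
    ∃ σ : Equiv.Perm α, X.map σ.toEmbedding = Y := by
  let σ : Equiv.Perm α := (X.equivOfCardEq h).extendSubtype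
  refine ⟨σ, eq_of_subset_of_card_le ?_ (by simp [h])⟩
  intro y hy
  obtain ⟨x, hx, rfl⟩ := mem_map.1 hy
  exact Equiv.extendSubtype_mem _ x hx

variable {A A' : Finset α} {𝓕 𝓖 : Finset (Finset α)}

lemma union_inter_sdiff_of_subset_of_disjoint {c d : Finset α} (hc : c ⊆ A) (hd : Disjoint d A) :
    (c ∪ d) ∩ A = c ∧ (c ∪ d) \ A = d := by
  constructor
  · rw [union_inter_distrib_right, inter_eq_left.2 hc, disjoint_iff_inter_eq_empty.1 hd,
      union_empty]
  · rw [union_sdiff_distrib, sdiff_eq_empty_iff_subset.2 hc, sdiff_eq_self_of_disjoint hd,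
      empty_union]

lemma card_sups_of_subset_of_disjoint (hF : ∀ c ∈ 𝓕, c ⊆ A) (hG : ∀ d ∈ 𝓖, Disjoint d A) :
    #(𝓕 ⊻ 𝓖) = #𝓕 * #𝓖 := by
  refine (card_sups_iff 𝓕 𝓖).2 ?_
  rintro ⟨c, d⟩ ⟨hc, hd⟩ ⟨c', d'⟩ ⟨hc', hd'⟩ (h : c ∪ d = c' ∪ d')
  obtain ⟨h₁, h₂⟩ := union_inter_sdiff_of_subset_of_disjoint (hF c hc) (hG d hd)
  obtain ⟨h₁', h₂'⟩ := union_inter_sdiff_of_subset_of_disjoint (hF c' hc') (hG d' hd')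
  rw [h] at h₁ h₂
  exact Prod.ext (h₁.symm.trans h₁') (h₂.symm.trans h₂')

lemma filter_superset_sups (hF : ∀ c ∈ 𝓕, c ⊆ A) (hG : ∀ d ∈ 𝓖, Disjoint d A) (T : Finset α) :
    {b ∈ 𝓕 ⊻ 𝓖 | T ⊆ b} = {c ∈ 𝓕 | T ∩ A ⊆ c} ⊻ {d ∈ 𝓖 | T \ A ⊆ d} := by
  ext b
  simp only [mem_filter, mem_sups]
  constructor
  · rintro ⟨⟨c, hc, d, hd, rfl⟩, hT⟩
    obtain ⟨h₁, h₂⟩ := union_inter_sdiff_of_subset_of_disjoint (hF c hc) (hG d hd)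
    exact ⟨c, ⟨hc, h₁ ▸ inter_subset_inter_right hT⟩, d,
      ⟨hd, h₂ ▸ sdiff_subset_sdiff hT le_rfl⟩, rfl⟩
  · rintro ⟨c, ⟨hc, hTc⟩, d, ⟨hd, hTd⟩, rfl⟩
    refine ⟨⟨c, hc, d, hd, rfl⟩, ?_⟩
    rw [← sdiff_union_inter T A, union_comm]
    exact union_subset_union hTc hTd

lemma card_filter_superset_sups (hF : ∀ c ∈ 𝓕, c ⊆ A) (hG : ∀ d ∈ 𝓖, Disjoint d A)
    (T : Finset α) :
    #{b ∈ 𝓕 ⊻ 𝓖 | T ⊆ b} = #{c ∈ 𝓕 | T ∩ A ⊆ c} * #{d ∈ 𝓖 | T \ A ⊆ d} := by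
  rw [filter_superset_sups hF hG T]
  exact card_sups_of_subset_of_disjoint (fun c hc => hF c (mem_filter.1 hc).1)
    (fun d hd => hG d (mem_filter.1 hd).1)

lemma sups_subset_powersetCard_union {i j : ℕ} (hAA' : Disjoint A A')
    (h𝓕 : 𝓕 ⊆ A.powersetCard i) (h𝓖 : 𝓖 ⊆ A'.powersetCard j) :
    𝓕 ⊻ 𝓖 ⊆ (A ∪ A').powersetCard (i + j) := by
  refine sups_subset_iff.2 fun c hc d hd => ?_
  obtain ⟨hcA, rfl⟩ := mem_powersetCard.1 (h𝓕 hc)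
  obtain ⟨hdA', rfl⟩ := mem_powersetCard.1 (h𝓖 hd)
  exact mem_powersetCard.2
    ⟨union_subset_union hcA hdA', card_union_of_disjoint (hAA'.mono hcA hdA')⟩

lemma card_inter_of_mem_sups {i j : ℕ} (hAA' : Disjoint A A')
    (h𝓕 : 𝓕 ⊆ A.powersetCard i) (h𝓖 : 𝓖 ⊆ A'.powersetCard j) {b : Finset α}
    (hb : b ∈ 𝓕 ⊻ 𝓖) : #(b ∩ A) = i := by
  obtain ⟨c, hc, d, hd, rfl⟩ := mem_sups.1 hb
  obtain ⟨hcA, rfl⟩ := mem_powersetCard.1 (h𝓕 hc)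
  have hdA : Disjoint d A := (hAA'.mono_right (mem_powersetCard.1 (h𝓖 hd)).1).symm
  rw [sup_eq_union, (union_inter_sdiff_of_subset_of_disjoint hcA hdA).1]

end Finset

variable {α β : Type*} [DecidableEq α] [DecidableEq β]

def IsDesign (t k lam : ℕ) (X : Finset α) (𝓑 : Finset (Finset α)) : Prop :=
  𝓑 ⊆ X.powersetCard k ∧ ∀ T ⊆ X, #T = t → #{b ∈ 𝓑 | T ⊆ b} = lam

def IsBalanced (t : ℕ) (μ : ℕ → ℕ) (X : Finset α) (𝓑 : Finset (Finset α)) : Prop :=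
  ∀ S ⊆ X, #S ≤ t → #{b ∈ 𝓑 | S ⊆ b} = μ #S

namespace IsDesign

variable {t k lam : ℕ} {X : Finset α} {𝓑 : Finset (Finset α)}

lemma map (h : IsDesign t k lam X 𝓑) (e : α ↪ β) :
    IsDesign t k lam (X.map e) (𝓑.map (mapEmbedding e).toEmbedding) := by
  refine ⟨?_, ?_⟩
  · intro b' hb'
    obtain ⟨b, hb, rfl⟩ := mem_map.1 hb'
    simpa [mem_powersetCard] using mem_powersetCard.1 (h.1 hb)
  · intro T hT hTt
    obtain ⟨S, hS, rfl⟩ := subset_map_iff.1 hT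
    rw [filter_map, card_map]
    convert h.2 S hS (by rwa [card_map] at hTt) using 3 with b
    simp

lemma card_filter_mul_choose (h : IsDesign t k lam X 𝓑) {S : Finset α} (hS : S ⊆ X) (hSt : #S ≤ t) :
    #{b ∈ 𝓑 | S ⊆ b} * (k - #S).choose (t - #S) = lam * (#X - #S).choose (t - #S) := by
  set 𝓣 := {T ∈ X.powersetCard t | S ⊆ T}
  have hcount := sum_card_bipartiteAbove_eq_sum_card_bipartiteBelow (s := 𝓣) (t := 𝓑) (r := (· ⊆ ·))
  have htop : ∀ T ∈ 𝓣, #(𝓑.bipartiteAbove (· ⊆ ·) T) = lam := by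
    intro T hT
    simp only [𝓣, mem_filter, mem_powersetCard] at hT
    exact h.2 T hT.1.1 hT.1.2
  have hbot : ∀ b ∈ 𝓑, #(𝓣.bipartiteBelow (· ⊆ ·) b) =
      if S ⊆ b then (k - #S).choose (t - #S) else 0 := by
    intro b hb
    obtain ⟨hbX, hbk⟩ := mem_powersetCard.1 (h.1 hb)
    split_ifs with hSb
    · rw [← hbk, ← card_filter_powersetCard_superset hSb hSt]
      congr 1
      ext T
      simp only [𝓣, bipartiteBelow, mem_filter, mem_powersetCard]
      constructor
      · rintro ⟨⟨⟨-, hT⟩, hST⟩, hTb⟩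
        exact ⟨⟨hTb, hT⟩, hST⟩
      · rintro ⟨⟨hTb, hT⟩, hST⟩
        exact ⟨⟨⟨hTb.trans hbX, hT⟩, hST⟩, hTb⟩
    · refine card_eq_zero.2 (filter_eq_empty_iff.2 fun T hT hTb => hSb ?_)
      exact (mem_filter.1 hT).2.trans hTb
  rw [sum_congr rfl htop, sum_congr rfl hbot, sum_const, sum_ite, sum_const_zero, sum_const,
    smul_eq_mul, smul_eq_mul, add_zero, card_filter_powersetCard_superset hS hSt] at hcount
  rw [← hcount, mul_comm]

lemma isBalanced (h : IsDesign t k lam X 𝓑) (htk : t ≤ k) :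
    IsBalanced t (fun s => lam * (#X - s).choose (t - s) / (k - s).choose (t - s)) X 𝓑 := by
  intro S hS hSt
  dsimp only
  rw [← h.card_filter_mul_choose hS hSt, Nat.mul_div_cancel _ (Nat.choose_pos (by omega))]

end IsDesign

lemma isBalanced_powersetCard (t n : ℕ) (X : Finset α) :
    IsBalanced t (fun s => if s ≤ n then (#X - s).choose (n - s) else 0) X (X.powersetCard n) := by
  intro S hS _
  dsimp only
  split_ifs with hSn
  · exact card_filter_powersetCard_superset hS hSn
  · refine card_eq_zero.2 (filter_eq_empty_iff.2 fun T hT hST => hSn ?_)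
    exact (card_le_card hST).trans (mem_powersetCard.1 hT).2.le

theorem isDesign_biUnion_sups {t k lam : ℕ} {A A' : Finset α} (hAA' : Disjoint A A')
    {𝓕 𝓖 : ℕ → Finset (Finset α)} {μ ν : ℕ → ℕ → ℕ}
    (h𝓕 : ∀ i ≤ k, 𝓕 i ⊆ A.powersetCard i) (h𝓖 : ∀ i ≤ k, 𝓖 i ⊆ A'.powersetCard i)
    (hμ : ∀ i ≤ k, IsBalanced t (μ i) A (𝓕 i)) (hν : ∀ i ≤ k, IsBalanced t (ν i) A' (𝓖 i))
    (hlam : ∀ s ≤ t, ∑ i ∈ range (k + 1), μ i s * ν (k - i) (t - s) = lam) :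
    IsDesign t k lam (A ∪ A') ((range (k + 1)).biUnion fun i => 𝓕 i ⊻ 𝓖 (k - i)) := by
  have hk {i : ℕ} (hi : i ∈ range (k + 1)) : i ≤ k := Nat.lt_succ_iff.1 (mem_range.1 hi)
  refine ⟨biUnion_subset.2 fun i hi => ?_, fun T hT hTt => ?_⟩
  · simpa [Nat.add_sub_cancel' (hk hi)] using
      sups_subset_powersetCard_union hAA' (h𝓕 i (hk hi)) (h𝓖 (k - i) (Nat.sub_le k i))
  have hTA : #(T ∩ A) ≤ t := hTt ▸ card_le_card inter_subset_left
  have hTA' : T \ A ⊆ A' := fun x hx => (mem_union.1 (hT (mem_sdiff.1 hx).1)).resolve_left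
    (mem_sdiff.1 hx).2
  have hsplit : #(T \ A) = t - #(T ∩ A) := by
    rw [← hTt, ← card_sdiff_add_card_inter T A]
    omega
  have hlayer (i : ℕ) (hi : i ∈ range (k + 1)) :
      #{b ∈ 𝓕 i ⊻ 𝓖 (k - i) | T ⊆ b} = μ i #(T ∩ A) * ν (k - i) (t - #(T ∩ A)) := by
    have hc : ∀ c ∈ 𝓕 i, c ⊆ A := fun c hc => (mem_powersetCard.1 (h𝓕 i (hk hi) hc)).1
    have hd : ∀ d ∈ 𝓖 (k - i), Disjoint d A := fun d hd =>
      (hAA'.mono_right (mem_powersetCard.1 (h𝓖 (k - i) (Nat.sub_le k i) hd)).1).symm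
    rw [card_filter_superset_sups hc hd, hμ i (hk hi) _ inter_subset_right hTA,
      hν (k - i) (Nat.sub_le k i) _ hTA' (hsplit ▸ Nat.sub_le t _), hsplit]
  have hdisj : ∀ i ∈ range (k + 1), ∀ j ∈ range (k + 1), i ≠ j →
      Disjoint (𝓕 i ⊻ 𝓖 (k - i)) (𝓕 j ⊻ 𝓖 (k - j)) := fun i hi j hj hij =>
    disjoint_left.2 fun b hbi hbj => hij <|
      (card_inter_of_mem_sups hAA' (h𝓕 i (hk hi)) (h𝓖 _ (Nat.sub_le k i)) hbi).symm.trans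
        (card_inter_of_mem_sups hAA' (h𝓕 j (hk hj)) (h𝓖 _ (Nat.sub_le k j)) hbj)
  rw [filter_biUnion,
    card_biUnion fun i hi j hj hij => disjoint_filter_filter (hdisj i hi j hj hij),
    sum_congr rfl hlayer, hlam _ hTA]

namespace SimpleDesignExists

lemma exists_isDesign {t v k lam : ℕ} (h : SimpleDesignExists t v k lam) {Y : Finset ℕ}
    (hY : #Y = v) : ∃ 𝓑, IsDesign t k lam Y 𝓑 := by
  obtain ⟨X, 𝓑, hX, hblocks, hcount⟩ := h
  obtain ⟨σ, rfl⟩ := exists_perm_map_eq (hX.trans hY.symm)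
  exact ⟨_, IsDesign.map ⟨fun b hb => mem_powersetCard.2 (hblocks b hb), hcount⟩ σ.toEmbedding⟩

lemma of_isDesign {t k lam : ℕ} {X : Finset ℕ} {𝓑 : Finset (Finset ℕ)}
    (h : IsDesign t k lam X 𝓑) : SimpleDesignExists t #X k lam :=
  ⟨X, 𝓑, rfl, fun _ hb => mem_powersetCard.1 (h.1 hb), h.2⟩

lemma zero (t v k : ℕ) : SimpleDesignExists t v k 0 :=
  ⟨range v, ∅, card_range v, by simp, by simp⟩

end SimpleDesignExists

/-- `λ_s` of the `j`-th layer: the complete `j`-uniform family for `j ≤ t`, a `t-(v, j, lam j)`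
design for `j > t`. -/
def layerCount (t v : ℕ) (lam : ℕ → ℕ) (j s : ℕ) : ℕ :=
  if j ≤ t then if s ≤ j then (v - s).choose (j - s) else 0
  else lam j * (v - s).choose (t - s) / (j - s).choose (t - s)

lemma exists_layers {t v k : ℕ} {lam : ℕ → ℕ}
    (hlam : ∀ j, t < j → j ≤ k → SimpleDesignExists t v j (lam j)) {Y : Finset ℕ} (hY : #Y = v) :
    ∃ 𝓛 : ℕ → Finset (Finset ℕ), ∀ j ≤ k,
      𝓛 j ⊆ Y.powersetCard j ∧ IsBalanced t (layerCount t v lam j) Y (𝓛 j) := by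
  have hlayer : ∀ j, ∃ 𝓛 : Finset (Finset ℕ), j ≤ k →
      𝓛 ⊆ Y.powersetCard j ∧ IsBalanced t (layerCount t v lam j) Y 𝓛 := by
    intro j
    by_cases hjt : j ≤ t
    · refine ⟨Y.powersetCard j, fun _ => ⟨subset_rfl, ?_⟩⟩
      convert isBalanced_powersetCard t j Y using 1
      funext s
      simp [layerCount, hjt, hY]
    by_cases hjk : j ≤ k
    · obtain ⟨𝓑, h𝓑⟩ := (hlam j (by omega) hjk).exists_isDesign hY
      refine ⟨𝓑, fun _ => ⟨h𝓑.1, ?_⟩⟩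
      convert h𝓑.isBalanced (by omega) using 1
      funext s
      simp [layerCount, hjt, hY]
    · exact ⟨∅, fun h => absurd h hjk⟩
  choose 𝓛 h𝓛 using hlayer
  exact ⟨𝓛, h𝓛⟩

theorem SimpleDesignExists.double {t v k Λ : ℕ} (lam : ℕ → ℕ)
    (hlam : ∀ j, t < j → j ≤ k → SimpleDesignExists t v j (lam j))
    (hΛ : ∀ s ≤ t, ∑ i ∈ range (k + 1),
      layerCount t v lam i s * layerCount t v lam (k - i) (t - s) = Λ) :
    SimpleDesignExists t (2 * v) k Λ := by
  obtain ⟨𝓕, h𝓕⟩ := exists_layers hlam (card_range v)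
  obtain ⟨𝓖, h𝓖⟩ := exists_layers hlam (Y := Ico v (2 * v)) (by simp; omega)
  have hdisj : Disjoint (range v) (Ico v (2 * v)) := by
    simp only [disjoint_left, mem_range, mem_Ico]
    omega
  have hcard : #(range v ∪ Ico v (2 * v)) = 2 * v := by
    rw [card_union_of_disjoint hdisj, card_range, Nat.card_Ico]
    omega
  have h := isDesign_biUnion_sups hdisj (fun i hi => (h𝓕 i hi).1) (fun i hi => (h𝓖 i hi).1)
    (fun i hi => (h𝓕 i hi).2) (fun i hi => (h𝓖 i hi).2) hΛ
  exact hcard ▸ SimpleDesignExists.of_isDesign h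

theorem designExists_5_36_10_1304
    (h1 : SimpleDesignExists 5 18 7 66)
    (h2 : SimpleDesignExists 5 18 8 112)
    (h3 : SimpleDesignExists 5 18 9 100)
    (h4 : SimpleDesignExists 5 18 10 792)
    : SimpleDesignExists 5 36 10 82152 := by
  let lam : ℕ → ℕ
    | 7 => 66 | 8 => 112 | 9 => 100 | 10 => 792 | _ => 0
  refine SimpleDesignExists.double (v := 18) lam (fun j hj hjk => ?_) (by decide)
  interval_cases j
  · exact SimpleDesignExists.zero 5 18 6
  · exact h1
  · exact h2
  · exact h3
  · exact h4
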